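/- arXiv:0708.2997 — 2 statements merged into one kernel-verified Lean document; each statement's English description precedes it below -/
import Mathlib

section
/- Under the hypotheses of the frustum volume lemma (affine functional φ taking value -1 on p vertices and +1 on q = n-p+1 vertices of an n-simplex Δ), the ratio r_{p,q} = vol({v ∈ Δ : φ(v) ≤ 0}) / vol(Δ) equals 2^{-q} · ∑_{k=0}^{p-1} C(q-1+k, k) · 2^{-k}. -/
/-!
Send the corner simplex `{x ≥ 0, ∑ x ≤ 1}` onto `Δ` by the affine map taking `0` to `b₀` and
the `j`-th basis vector to `b_{j+1}`. Its Jacobian is nonzero, so volume ratios are preserved,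
and `φ` pulls back to `-1 + 2 ∑_{j ∈ Q} x_j`, where `Q` indexes the `q` vertices among
`b₁, …, bₙ` on which `φ = 1`. Slicing along a coordinate of `Q` and integrating shows by
induction that `{x ≥ 0, ∑ x ≤ c, ∑_Q x ≤ t}` has volume `∑_{j ≥ |Q|} C(n,j) t^j (c-t)^(n-j) / n!`.
Hence the ratio is the binomial tail `2⁻ⁿ ∑_{j ≥ q} C(n,j)`, and Pascal's rule turns it into the
stated sum.
-/

open MeasureTheory Finset

def binomialTail (n q : ℕ) (t u : ℝ) : ℝ :=
  ∑ j ∈ Icc q n, (n.choose j : ℝ) * t ^ j * u ^ (n - j)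

theorem binomialTail_zero (n : ℕ) (t u : ℝ) : binomialTail n 0 t u = (t + u) ^ n := by
  rw [binomialTail, add_pow, range_eq_Ico, Ico_add_one_right_eq_Icc]
  exact sum_congr rfl fun j _ => by ring

theorem binomialTail_nonneg (n q : ℕ) {t u : ℝ} (ht : 0 ≤ t) (hu : 0 ≤ u) :
    0 ≤ binomialTail n q t u :=
  sum_nonneg fun _ _ => by positivity

theorem continuous_binomialTail (n q : ℕ) (u : ℝ) : Continuous fun t => binomialTail n q t u := by
  unfold binomialTail; fun_prop

theorem sum_range_choose_add_eq (a m : ℕ) :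
    ∑ i ∈ range (m + 1), (a + 1 + m).choose (a + 1 + i)
      = ∑ k ∈ range (m + 1), (a + k).choose k * 2 ^ (m - k) := by
  induction m with
  | zero => simp
  | succ m ih =>
    have hpascal : ∀ i, (a + 1 + (m + 1)).choose (a + 1 + i)
        = (a + 1 + m).choose (a + i) + (a + 1 + m).choose (a + 1 + i) := fun i => by
      rw [show a + 1 + (m + 1) = a + 1 + m + 1 by ring, show a + 1 + i = a + i + 1 by ring,
        Nat.choose_succ_succ]
    have hlhs : ∑ i ∈ range (m + 2), (a + 1 + (m + 1)).choose (a + 1 + i)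
        = (a + 1 + m).choose a + 2 * ∑ i ∈ range (m + 1), (a + 1 + m).choose (a + 1 + i) := by
      rw [sum_congr rfl fun i _ => hpascal i, sum_add_distrib, sum_range_succ',
        sum_range_succ _ (m + 1), Nat.choose_eq_zero_of_lt (by omega : a + 1 + m < a + 1 + (m + 1))]
      simp only [add_assoc, add_comm 1, add_zero]
      ring
    have hrhs : ∑ k ∈ range (m + 2), (a + k).choose k * 2 ^ (m + 1 - k)
        = (a + (m + 1)).choose (m + 1)
          + 2 * ∑ k ∈ range (m + 1), (a + k).choose k * 2 ^ (m - k) := by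
      rw [sum_range_succ, mul_sum, Nat.sub_self, pow_zero, mul_one, add_comm]
      congr 1
      refine sum_congr rfl fun k hk => ?_
      rw [Nat.sub_add_comm (Nat.lt_succ_iff.1 (mem_range.1 hk)), pow_succ]
      ring
    rw [hlhs, hrhs, ih, show a + 1 + m = a + (m + 1) by ring, Nat.choose_symm_add]

theorem binomialTail_half_half {n p : ℕ} (hp1 : 1 ≤ p) (hpn : p ≤ n) :
    binomialTail n (n - p + 1) (1 / 2) (1 / 2)
      = (1 / 2) ^ (n - p + 1) * ∑ k ∈ range p, ((n - p + k).choose k : ℝ) * (1 / 2) ^ k := by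
  obtain ⟨m, rfl⟩ : ∃ m, p = m + 1 := ⟨p - 1, by omega⟩
  obtain ⟨a, rfl⟩ : ∃ a, n = a + 1 + m := ⟨n - (m + 1), by omega⟩
  have ha : a + 1 + m - (m + 1) = a := by omega
  have hsum : binomialTail (a + 1 + m) (a + 1) (1 / 2) (1 / 2)
      = (∑ i ∈ range (m + 1), ((a + 1 + m).choose (a + 1 + i) : ℝ)) * (1 / 2) ^ (a + 1 + m) := by
    rw [binomialTail, sum_mul, ← Ico_add_one_right_eq_Icc, sum_Ico_eq_sum_range,
      show a + 1 + m + 1 - (a + 1) = m + 1 by omega]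
    refine sum_congr rfl fun i hi => ?_
    rw [mul_assoc, ← pow_add, Nat.add_sub_of_le (by simp at hi; omega)]
  rw [ha, hsum, ← Nat.cast_sum, sum_range_choose_add_eq, Nat.cast_sum, sum_mul, mul_sum]
  refine sum_congr rfl fun k hk => ?_
  have hk : k ≤ m := Nat.lt_succ_iff.1 (mem_range.1 hk)
  rw [show a + 1 + m = (a + 1) + k + (m - k) by omega, pow_add, pow_add]
  push_cast
  field_simp
  rw [mul_assoc, ← mul_pow]
  norm_num

theorem integral_sub_pow (t : ℝ) (j : ℕ) :
    ∫ s in (0 : ℝ)..t, (t - s) ^ j = t ^ (j + 1) / (j + 1) := by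
  rw [intervalIntegral.integral_comp_sub_left (fun u => u ^ j), sub_self, sub_zero, integral_pow,
    zero_pow j.succ_ne_zero, sub_zero]

theorem integral_binomialTail_sub (m q : ℕ) (t u : ℝ) :
    ∫ s in (0 : ℝ)..t, binomialTail m q (t - s) u = binomialTail (m + 1) (q + 1) t u / (m + 1) := by
  simp only [binomialTail]
  rw [intervalIntegral.integral_finsetSum fun j _ => by
      apply Continuous.intervalIntegrable; fun_prop,
    ← map_add_right_Icc q m 1, sum_map, sum_div]
  refine sum_congr rfl fun j hj => ?_
  have hchoose : ((m + 1).choose (j + 1) : ℝ) * (j + 1) = (m + 1) * m.choose j := by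
    exact_mod_cast (Nat.add_one_mul_choose_eq m j).symm
  rw [addRightEmbedding_apply, intervalIntegral.integral_mul_const,
    intervalIntegral.integral_const_mul, integral_sub_pow, Nat.add_sub_add_right]
  field_simp
  linear_combination -t ^ (j + 1) * u ^ (m - j) * hchoose

theorem card_filter_succAbove_mem {m : ℕ} {i₀ : Fin (m + 1)} {Q : Finset (Fin (m + 1))}
    (hi₀ : i₀ ∈ Q) : #{j : Fin m | i₀.succAbove j ∈ Q} = #Q - 1 := by
  rw [← card_erase_of_mem hi₀, ← card_map i₀.succAboveEmb]
  congr 1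
  ext i
  rcases eq_or_ne i i₀ with rfl | hi
  · simp
  · obtain ⟨j, rfl⟩ := Fin.exists_succAbove_eq hi
    simp [hi]

theorem sum_insertNth_of_mem {M : Type*} [AddCommMonoid M] {m : ℕ} {i₀ : Fin (m + 1)}
    {Q : Finset (Fin (m + 1))} (hi₀ : i₀ ∈ Q) (s : M) (y : Fin m → M) :
    ∑ i ∈ Q, i₀.insertNth s y i = s + ∑ j ∈ {j : Fin m | i₀.succAbove j ∈ Q}, y j := by
  rw [← univ_inter Q, ← sum_ite_mem, Fin.sum_univ_succAbove _ i₀, sum_filter]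
  simp [hi₀]

theorem card_filter_le_val_add_one {n p : ℕ} (hp1 : 1 ≤ p) (hpn : p ≤ n) :
    #{j : Fin n | p ≤ (j : ℕ) + 1} = n - p + 1 := by
  have hlt := Fin.card_filter_val_lt (n := n) (m := p - 1)
  have hsplit := card_filter_add_card_filter_not (s := univ) fun j : Fin n => (j : ℕ) < p - 1
  simp only [card_univ, Fintype.card_fin, not_lt] at hsplit
  simp only [show ∀ j : Fin n, p ≤ (j : ℕ) + 1 ↔ p - 1 ≤ j from fun j => by omega]
  omega

theorem volume_eq_lintegral_volume_insertNth {m : ℕ} (i₀ : Fin (m + 1))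
    {S : Set (Fin (m + 1) → ℝ)} (hS : MeasurableSet S) :
    volume S = ∫⁻ s, volume {y : Fin m → ℝ | i₀.insertNth s y ∈ S} := by
  have h := (volume_preserving_piFinSuccAbove (fun _ : Fin (m + 1) => ℝ) i₀).symm
  rw [← h.measure_preimage hS.nullMeasurableSet, Measure.volume_eq_prod,
    Measure.prod_apply (((MeasurableEquiv.piFinSuccAbove (fun _ => ℝ) i₀).symm).measurable hS)]
  rfl

theorem volume_eq_ofReal_integral_of_slice {m : ℕ} (i₀ : Fin (m + 1))
    {S : Set (Fin (m + 1) → ℝ)} (hS : MeasurableSet S) {a b : ℝ} (hab : a ≤ b) {f : ℝ → ℝ}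
    (hf : ContinuousOn f (Set.Icc a b)) (hf0 : ∀ s ∈ Set.Icc a b, 0 ≤ f s)
    (hslice : ∀ s, volume {y : Fin m → ℝ | i₀.insertNth s y ∈ S}
      = (Set.Icc a b).indicator (fun s => ENNReal.ofReal (f s)) s) :
    volume S = ENNReal.ofReal (∫ s in a..b, f s) := by
  rw [volume_eq_lintegral_volume_insertNth i₀ hS, lintegral_congr hslice,
    lintegral_indicator measurableSet_Icc, intervalIntegral.integral_of_le hab,
    ← integral_Icc_eq_integral_Ioc, ofReal_integral_eq_lintegral_ofReal hf.integrableOn_Icc]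
  exact (ae_restrict_iff' measurableSet_Icc).2 (.of_forall hf0)

def cornerSimplex (n : ℕ) (c : ℝ) : Set (Fin n → ℝ) := {x | (∀ i, 0 ≤ x i) ∧ ∑ i, x i ≤ c}

theorem measurableSet_cornerSimplex (n : ℕ) (c : ℝ) : MeasurableSet (cornerSimplex n c) :=
  (measurableSet_le measurable_const measurable_id).inter
    (measurableSet_le (Finset.measurable_sum _ fun i _ => measurable_pi_apply i) measurable_const)

theorem measurableSet_sum_le {ι : Type*} [Fintype ι] (Q : Finset ι) (t : ℝ) :
    MeasurableSet {x : ι → ℝ | ∑ i ∈ Q, x i ≤ t} :=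
  measurableSet_le (by fun_prop) measurable_const

theorem cornerSimplex_eq_empty {n : ℕ} {c : ℝ} (hc : c < 0) : cornerSimplex n c = ∅ :=
  Set.eq_empty_of_forall_notMem fun _ hx =>
    (sum_nonneg fun i _ => hx.1 i).not_gt (hx.2.trans_lt hc)

theorem insertNth_mem_cornerSimplex {m : ℕ} (i₀ : Fin (m + 1)) (c s : ℝ) (y : Fin m → ℝ) :
    i₀.insertNth s y ∈ cornerSimplex (m + 1) c ↔ 0 ≤ s ∧ y ∈ cornerSimplex m (c - s) := by
  simp only [cornerSimplex, Set.mem_ofPred, Fin.forall_iff_succAbove i₀,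
    Fin.sum_univ_succAbove _ i₀, Fin.insertNth_apply_same, Fin.insertNth_apply_succAbove,
    le_sub_iff_add_le', and_assoc]

theorem volume_cornerSimplex (n : ℕ) {c : ℝ} (hc : 0 ≤ c) :
    volume (cornerSimplex n c) = ENNReal.ofReal (c ^ n / n.factorial) := by
  induction n generalizing c with
  | zero =>
    have : cornerSimplex 0 c = Set.univ := by ext x; simp [cornerSimplex, hc]
    simp [this, volume_pi]
  | succ n ih =>
    rw [volume_eq_ofReal_integral_of_slice 0 (measurableSet_cornerSimplex _ c) hc
      (f := fun s => (c - s) ^ n / n.factorial) (by fun_prop)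
      (fun s hs => div_nonneg (pow_nonneg (sub_nonneg.2 hs.2) n) (Nat.cast_nonneg _))]
    · rw [intervalIntegral.integral_div, integral_sub_pow, Nat.factorial_succ]
      push_cast
      congr 1
      field_simp
    · intro s
      simp only [insertNth_mem_cornerSimplex, Set.ofPred_and, Set.ofPred_mem_eq]
      by_cases hs : s ∈ Set.Icc 0 c
      · simp [hs.1, ih (sub_nonneg.2 hs.2), hs]
      · rw [Set.indicator_of_notMem hs]
        rcases not_and_or.1 hs with hs | hs
        · simp [hs]
        · simp [cornerSimplex_eq_empty (sub_neg.2 (not_le.1 hs))]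

theorem insertNth_mem_cornerSimplex_inter_sum_le {m : ℕ} {i₀ : Fin (m + 1)}
    {Q : Finset (Fin (m + 1))} (hi₀ : i₀ ∈ Q) {c t s : ℝ} {y : Fin m → ℝ} :
    i₀.insertNth s y ∈ cornerSimplex (m + 1) c ∩ {x | ∑ i ∈ Q, x i ≤ t}
      ↔ 0 ≤ s ∧ y ∈ cornerSimplex m (c - s) ∩
          {y | ∑ j ∈ {j | i₀.succAbove j ∈ Q}, y j ≤ t - s} := by
  simp only [Set.mem_inter_iff, insertNth_mem_cornerSimplex, Set.mem_ofPred,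
    sum_insertNth_of_mem hi₀, le_sub_iff_add_le', and_assoc]

theorem volume_cornerSimplex_inter_sum_le {n : ℕ} (Q : Finset (Fin n)) {t c : ℝ} (ht : 0 ≤ t)
    (htc : t ≤ c) :
    volume (cornerSimplex n c ∩ {x | ∑ i ∈ Q, x i ≤ t})
      = ENNReal.ofReal (binomialTail n #Q t (c - t) / n.factorial) := by
  induction n generalizing t c with
  | zero =>
    simp [Subsingleton.elim Q ∅, ht, binomialTail_zero, volume_cornerSimplex 0 (ht.trans htc)]
  | succ m ih =>
    obtain rfl | ⟨i₀, hi₀⟩ := Q.eq_empty_or_nonempty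
    · simp [ht, binomialTail_zero, volume_cornerSimplex _ (ht.trans htc)]
    set Q' : Finset (Fin m) := {j | i₀.succAbove j ∈ Q}
    have hQ' : #Q' + 1 = #Q := by
      rw [card_filter_succAbove_mem hi₀]; have := card_pos.2 ⟨i₀, hi₀⟩; omega
    rw [volume_eq_ofReal_integral_of_slice i₀
      ((measurableSet_cornerSimplex _ c).inter (measurableSet_sum_le Q t)) ht
      (f := fun s => binomialTail m #Q' (t - s) (c - t) / m.factorial)
      ((continuous_binomialTail _ _ _).comp (continuous_sub_left t) |>.div_const _).continuousOn
      (fun s hs => div_nonneg (binomialTail_nonneg _ _ (sub_nonneg.2 hs.2) (sub_nonneg.2 htc))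
        (Nat.cast_nonneg _))]
    · rw [intervalIntegral.integral_div, integral_binomialTail_sub, hQ', Nat.factorial_succ]
      push_cast
      rw [div_div]
    · intro s
      simp_rw [insertNth_mem_cornerSimplex_inter_sum_le hi₀]
      by_cases hs : s ∈ Set.Icc 0 t
      · rw [Set.indicator_of_mem hs]
        simp only [hs.1, true_and, Set.ofPred_mem_eq]
        rw [ih Q' (sub_nonneg.2 hs.2) (by linarith), sub_sub_sub_cancel_right]
      · have hempty : {y | 0 ≤ s ∧ y ∈ cornerSimplex m (c - s) ∩ {y | ∑ j ∈ Q', y j ≤ t - s}} = ∅ :=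
          Set.eq_empty_of_forall_notMem fun y ⟨hs0, hy, hyQ⟩ => hs ⟨hs0, by
            linarith [sum_nonneg fun j (_ : j ∈ Q') => hy.1 j, show ∑ j ∈ Q', y j ≤ t - s from hyQ]⟩
        rw [Set.indicator_of_notMem hs, hempty, measure_empty]

theorem image_funLeft_succ_stdSimplex (n : ℕ) :
    LinearMap.funLeft ℝ ℝ Fin.succ '' stdSimplex ℝ (Fin (n + 1)) = cornerSimplex n 1 := by
  ext y
  simp only [Set.mem_image, cornerSimplex, Set.mem_ofPred]
  constructor
  · rintro ⟨x, ⟨hx0, hx1⟩, rfl⟩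
    rw [Fin.sum_univ_succ] at hx1
    exact ⟨fun i => hx0 _, by simp only [LinearMap.funLeft_apply]; linarith [hx0 0]⟩
  · rintro ⟨hy0, hy1⟩
    refine ⟨Fin.cons (1 - ∑ i, y i) y, ⟨fun i => ?_, ?_⟩, ?_⟩
    · cases i using Fin.cases <;> simp [hy0, hy1]
    · simp [Fin.sum_univ_succ]
    · ext i; simp

theorem convexHull_insert_zero_single (n : ℕ) :
    convexHull ℝ (insert 0 (Set.range fun j : Fin n => Pi.single j (1 : ℝ)))
      = cornerSimplex n 1 := by
  have hvert :
      LinearMap.funLeft ℝ ℝ Fin.succ '' Set.range (fun i : Fin (n + 1) => Pi.single i (1 : ℝ))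
      = insert 0 (Set.range fun j : Fin n => Pi.single j (1 : ℝ)) := by
    rw [← Set.range_comp, Fin.range_fin_succ]
    refine congrArg (insert _) (congrArg Set.range (funext fun j => funext fun i => ?_))
    simp [Fin.tail, Pi.single_apply]
  rw [← hvert, ← LinearMap.image_convexHull, convexHull_rangle_single_eq_stdSimplex,
    image_funLeft_succ_stdSimplex]

section AffineMapOfVertices

variable {E : Type*} [AddCommGroup E] [Module ℝ E]

def affineMapOfVertices {n : ℕ} (b : Fin (n + 1) → E) : (Fin n → ℝ) →ᵃ[ℝ] E :=
  (Fintype.linearCombination ℝ fun j => b j.succ - b 0).toAffineMap + AffineMap.const ℝ _ (b 0)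

theorem affineMapOfVertices_apply {n : ℕ} (b : Fin (n + 1) → E) (x : Fin n → ℝ) :
    affineMapOfVertices b x = ∑ j, x j • (b j.succ - b 0) + b 0 := by
  simp [affineMapOfVertices, Fintype.linearCombination_apply]

@[simp]
theorem affineMapOfVertices_linear {n : ℕ} (b : Fin (n + 1) → E) :
    (affineMapOfVertices b).linear = Fintype.linearCombination ℝ fun j => b j.succ - b 0 := by
  simp [affineMapOfVertices]

theorem image_cornerSimplex_affineMapOfVertices {n : ℕ} (b : Fin (n + 1) → E) :
    affineMapOfVertices b '' cornerSimplex n 1 = convexHull ℝ (Set.range b) := by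
  rw [← convexHull_insert_zero_single, AffineMap.image_convexHull, Set.image_insert_eq,
    ← Set.range_comp, Fin.range_fin_succ b]
  congr 2
  · simp [affineMapOfVertices_apply]
  · ext j; simp [affineMapOfVertices_apply, Pi.single_apply, Fin.tail]

theorem apply_affineMapOfVertices {n : ℕ} (b : Fin (n + 1) → E) (φ : E →ᵃ[ℝ] ℝ) (x : Fin n → ℝ) :
    φ (affineMapOfVertices b x) = φ (b 0) + ∑ j, x j * (φ (b j.succ) - φ (b 0)) := by
  rw [affineMapOfVertices_apply, ← vadd_eq_add, φ.map_vadd, map_sum, vadd_eq_add, add_comm]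
  simp [← vsub_eq_sub, φ.linearMap_vsub]

end AffineMapOfVertices

theorem AffineIndependent.det_linear_affineMapOfVertices_ne_zero {n : ℕ}
    {b : Fin (n + 1) → (Fin n → ℝ)} (hb : AffineIndependent ℝ b) :
    LinearMap.det (affineMapOfVertices b).linear ≠ 0 := by
  have hli : LinearIndependent ℝ fun j : Fin n => b j.succ - b 0 :=
    ((affineIndependent_iff_linearIndependent_vsub ℝ b 0).1 hb).comp
      (fun j : Fin n => (⟨j.succ, Fin.succ_ne_zero j⟩ : {i // i ≠ (0 : Fin (n + 1))}))
      fun j j' h => Fin.succ_injective _ (congrArg Subtype.val h)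
  rw [Ne, LinearMap.det_eq_zero_iff_ker_ne_bot, not_not, affineMapOfVertices_linear,
    LinearMap.ker_eq_bot]
  exact hli.fintypeLinearCombination_injective

theorem addHaar_image_div_addHaar_image {F : Type*} [NormedAddCommGroup F] [NormedSpace ℝ F]
    [MeasurableSpace F] [BorelSpace F] [FiniteDimensional ℝ F] (μ : Measure F) [μ.IsAddHaarMeasure]
    {f : F →ᵃ[ℝ] F} (hf : LinearMap.det f.linear ≠ 0) (A B : Set F) :
    μ (f '' A) / μ (f '' B) = μ A / μ B := by
  have himage : ∀ A : Set F, μ (f '' A) = ENNReal.ofReal |LinearMap.det f.linear| * μ A := by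
    intro A
    have hf' : ⇑f = (f 0 +ᵥ ·) ∘ f.linear := by
      ext x; rw [AffineMap.decomp]; simp [add_comm]
    rw [hf', Set.image_comp, Set.image_vadd, measure_vadd, Measure.addHaar_image_linearMap]
  rw [himage, himage, ENNReal.mul_div_mul_left _ _ (by simpa using hf) ENNReal.ofReal_ne_top]

/-- with q = n-p+1, the ratio r_{p,q} = vol({φ ≤ 0} ∩ Δ)/vol(Δ)
equals 2^{-q} · ∑_{k=0}^{p-1} C(q-1+k, k) · 2^{-k}. -/
theorem stmt3 (n p : ℕ) (hp1 : 1 ≤ p) (hpn : p ≤ n)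
    (b : Fin (n+1) → (Fin n → ℝ)) (hb : AffineIndependent ℝ b)
    (φ : (Fin n → ℝ) →ᵃ[ℝ] ℝ)
    (hneg : ∀ i : Fin (n+1), (i : ℕ) < p → φ (b i) = -1)
    (hpos : ∀ i : Fin (n+1), p ≤ (i : ℕ) → φ (b i) = 1) :
    volume {v ∈ convexHull ℝ (Set.range b) | φ v ≤ 0}
        / volume (convexHull ℝ (Set.range b))
      = ENNReal.ofReal ((1/2)^(n-p+1)
          * ∑ k ∈ Finset.range p, (Nat.choose (n-p+k) k : ℝ) * (1/2)^k) := by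
  set T := affineMapOfVertices b
  set Q : Finset (Fin n) := {j | p ≤ (j : ℕ) + 1}
  have hb0 : φ (b 0) = -1 := hneg 0 (by simp; omega)
  have hφT : ∀ x, φ (T x) = -1 + 2 * ∑ j ∈ Q, x j := by
    intro x
    have hterm : ∀ j : Fin n, x j * (φ (b j.succ) - φ (b 0)) = if j ∈ Q then 2 * x j else 0 := by
      intro j
      by_cases hj : p ≤ (j : ℕ) + 1
      · simp [Q, hj, hb0, hpos j.succ (by simpa using hj)]; ring
      · simp [Q, hj, hb0, hneg j.succ (by simp; omega)]
    rw [apply_affineMapOfVertices, sum_congr rfl fun j _ => hterm j, sum_ite_mem, univ_inter,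
      mul_sum, hb0]
  have hcut : {v ∈ convexHull ℝ (Set.range b) | φ v ≤ 0}
      = T '' (cornerSimplex n 1 ∩ {x | ∑ j ∈ Q, x j ≤ 1 / 2}) := by
    have hpre : T ⁻¹' {v | φ v ≤ 0} = {x | ∑ j ∈ Q, x j ≤ 1 / 2} := by
      ext x
      simp only [Set.mem_preimage, Set.mem_ofPred, hφT]
      constructor <;> intro h <;> linarith
    rw [← hpre, Set.image_inter_preimage, image_cornerSimplex_affineMapOfVertices]
    rfl
  rw [hcut, ← image_cornerSimplex_affineMapOfVertices,
    addHaar_image_div_addHaar_image volume hb.det_linear_affineMapOfVertices_ne_zero,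
    volume_cornerSimplex_inter_sum_le Q (by norm_num) (by norm_num),
    volume_cornerSimplex n zero_le_one,
    card_filter_le_val_add_one hp1 hpn, show (1 : ℝ) - 1 / 2 = 1 / 2 by norm_num,
    binomialTail_half_half hp1 hpn, one_pow, ← ENNReal.ofReal_div_of_pos (by positivity)]
  congr 1
  field_simp
end

section
/- Let q : ℝ^n_+ → Δ^{n-1} be the normalization map q(ℓ) = ℓ / (ℓ_1 + ⋯ + ℓ_n), and let χ_n be the uniform probability measure on the unit cube [0,1]^n. Then the pushforward measure ν_n = q_*(χ_n) on Δ^{n-1} has density f_n(ℓ) = k_n · |ℓ|^{-n} with respect to the normalized Lebesgue measure μ_n, where |ℓ| = max_i ℓ_i and k_n^{-1} = ∫_{Δ^{n-1}} |ℓ|^{-n} dμ_n. -/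
open MeasureTheory Finset Filter

/-- The open standard simplex Δ^m ⊂ ℝ^{m+1}. -/
def Simplex (m : ℕ) : Set (Fin (m+1) → ℝ) :=
  {ℓ | (∀ i, 0 < ℓ i) ∧ ∑ i, ℓ i = 1}

/-- Parametrization of the hyperplane ∑ ℓ i = 1 by ℝ^m. -/
noncomputable def emb (m : ℕ) (x : Fin m → ℝ) : Fin (m+1) → ℝ :=
  Fin.snoc x (1 - ∑ i, x i)

/-- Normalized Lebesgue measure of a subset of the simplex Δ^m,
computed as a ratio of Lebesgue volumes in the parametrizing chart. -/
noncomputable def simplexMeasure (m : ℕ) (A : Set (Fin (m+1) → ℝ)) : ENNReal :=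
  volume (emb m ⁻¹' A) / volume (emb m ⁻¹' (Simplex m))

/-- The set Γ_p of length vectors for which every p-element subset is short. -/
def Gamma (m p : ℕ) : Set (Fin (m+1) → ℝ) :=
  {ℓ ∈ Simplex m | ∀ J : Finset (Fin (m+1)), J.card = p → ∑ i ∈ J, ℓ i < 1/2}

/-- The set Λ_p where some coordinate is ≥ 1/(2p). -/
def Lambda (m p : ℕ) : Set (Fin (m+1) → ℝ) :=
  {ℓ ∈ Simplex m | ∃ i, 1/(2*(p:ℝ)) ≤ ℓ i}

/-- The normalized Lebesgue measure μ_n on the simplex Δ^m ⊂ ℝ^{m+1},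
as an actual measure on ℝ^{m+1} (supported on the simplex). -/
noncomputable def simplexProb (m : ℕ) : Measure (Fin (m+1) → ℝ) :=
  (m.factorial : ENNReal) • Measure.map (emb m) (volume.restrict (emb m ⁻¹' Simplex m))

/-! Cone coordinates `y = t • emb m x` on the half-space `0 < ∑ i, y i` turn Lebesgue measure
into `t ^ m dt dx`: since `t • emb m x = Fin.snoc (t • x) (t - ∑ i, t * x i)`, for fixed `t` this is
a scaling of `ℝ^m` by `t`, and for fixed `t • x` a translation of the last coordinate. The ray
through a point `ℓ` of the simplex meets the open unit cube exactly for `0 < t < (max ℓ)⁻¹`, and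
normalization maps the whole ray back to `ℓ`; so the pushforward has density
`∫₀^{1/max ℓ} t ^ m dt = (max ℓ)^{-(m+1)} / (m+1)` in the chart. As the cube has volume one, the
total mass identifies the normalizing integral as `(m+1)!`. -/

open scoped ENNReal

section

variable {m : ℕ}

lemma lintegral_comp_smul_of_ne_zero {E : Type*} [NormedAddCommGroup E] [NormedSpace ℝ E]
    [MeasurableSpace E] [BorelSpace E] [FiniteDimensional ℝ E] (μ : Measure E)
    [μ.IsAddHaarMeasure] (G : E → ℝ≥0∞) {t : ℝ} (ht : t ≠ 0) :
    ∫⁻ x, G (t • x) ∂μ = ENNReal.ofReal |(t ^ Module.finrank ℝ E)⁻¹| * ∫⁻ x, G x ∂μ := by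
  calc ∫⁻ x, G (t • x) ∂μ = ∫⁻ x, G x ∂(μ.map (t • ·)) :=
        ((Homeomorph.smulOfNeZero t ht).measurableEmbedding.lintegral_map G).symm
    _ = _ := by rw [Measure.map_addHaar_smul μ ht, lintegral_smul_measure, smul_eq_mul]

lemma lintegral_eq_lintegral_lintegral_snoc (F : (Fin (m+1) → ℝ) → ℝ≥0∞)
    (hF : Measurable F) :
    ∫⁻ y, F y = ∫⁻ x : Fin m → ℝ, ∫⁻ c, F (Fin.snoc x c) := by
  set e := (MeasurableEquiv.piFinSuccAbove (fun _ : Fin (m+1) => ℝ) (Fin.last m)).symm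
  rw [← ((volume_preserving_piFinSuccAbove _ _).symm).lintegral_comp_emb e.measurableEmbedding,
    Measure.volume_eq_prod,
    lintegral_prod_symm (fun p => F (e p)) (hF.comp e.measurable).aemeasurable]
  simp [e, Fin.snocEquiv]

lemma lintegral_Ioo_pow {a : ℝ} (ha : 0 ≤ a) :
    ∫⁻ t in Set.Ioo 0 a, ENNReal.ofReal (t ^ m) = ENNReal.ofReal (a ^ (m+1) / (m+1)) := by
  rw [setLIntegral_congr Ioo_ae_eq_Ioc, ← ofReal_integral_eq_lintegral_ofReal
    (continuous_pow m).integrableOn_Ioc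
    ((ae_restrict_iff' measurableSet_Ioc).2 (.of_forall fun t ht => pow_nonneg ht.1.le m)),
    ← intervalIntegral.integral_of_le ha, integral_pow]
  simp

lemma smul_mem_pi_Ioo_iff {ι : Type*} [Fintype ι] [Nonempty ι] {ℓ : ι → ℝ} {t : ℝ}
    (ht : 0 < t) :
    t • ℓ ∈ Set.univ.pi (fun _ => Set.Ioo (0:ℝ) 1) ↔ (∀ i, 0 < ℓ i) ∧ t < (⨆ i, ℓ i)⁻¹ := by
  obtain ⟨j, hj⟩ := exists_eq_ciSup_of_finite (f := ℓ)
  simp only [Set.mem_univ_pi, Pi.smul_apply, smul_eq_mul, Set.mem_Ioo, forall_and,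
    mul_pos_iff_of_pos_left ht, ← lt_div_iff₀' ht, one_div]
  refine and_congr_right fun hpos => ?_
  rw [← hj, lt_inv_comm₀ ht (hpos j)]
  exact ⟨fun h => h j, fun h i => (hj ▸ le_ciSup (Finite.bddAbove_range ℓ) i).trans_lt h⟩

lemma sum_emb (x : Fin m → ℝ) : ∑ i, emb m x i = 1 := by
  simp [emb, Fin.sum_snoc]

@[fun_prop]
lemma measurable_emb : Measurable (emb m) := by
  unfold emb; fun_prop

lemma smul_emb (t : ℝ) (x : Fin m → ℝ) :
    t • emb m x = Fin.snoc (t • x) (t - ∑ i, (t • x) i) := by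
  ext i
  refine Fin.lastCases ?_ (fun j => ?_) i <;> simp [emb, ← Finset.mul_sum, mul_sub]

theorem setLIntegral_sum_pos_eq_lintegral_lintegral_smul_emb
    (F : (Fin (m+1) → ℝ) → ℝ≥0∞) (hF : Measurable F) :
    ∫⁻ y in {y | 0 < ∑ i, y i}, F y
      = ∫⁻ x : Fin m → ℝ, ∫⁻ t in Set.Ioi 0, F (t • emb m x) * ENNReal.ofReal (t ^ m) := by
  set U : Set (Fin (m+1) → ℝ) := {y | 0 < ∑ i, y i}
  have hU : MeasurableSet U := measurableSet_lt measurable_const (by fun_prop)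
  have hshift (u : Fin m → ℝ) :
      ∫⁻ t in Set.Ioi 0, F (Fin.snoc u (t - ∑ i, u i))
        = ∫⁻ c, U.indicator F (Fin.snoc u c) := by
    rw [← lintegral_indicator measurableSet_Ioi,
      ← lintegral_sub_right_eq_self (fun c => U.indicator F (Fin.snoc u c)) (∑ i, u i)]
    congr with t
    simp [U, Set.indicator, Fin.sum_snoc]
  have hscale (t : ℝ) (ht : t ∈ Set.Ioi 0) :
      ∫⁻ x, F (t • emb m x) * ENNReal.ofReal (t ^ m)
        = ∫⁻ u, F (Fin.snoc u (t - ∑ i, u i)) := by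
    have ht : 0 < t := ht
    rw [lintegral_mul_const' _ _ ENNReal.ofReal_ne_top]
    simp_rw [smul_emb]
    rw [lintegral_comp_smul_of_ne_zero volume (fun u => F (Fin.snoc u (t - ∑ i, u i))) ht.ne',
      Module.finrank_fin_fun, mul_comm, ← mul_assoc,
      ← ENNReal.ofReal_mul (by positivity), abs_of_pos (by positivity : 0 < (t ^ m)⁻¹),
      mul_inv_cancel₀ (by positivity : t ^ m ≠ 0), ENNReal.ofReal_one, one_mul]
  have hmeas : Measurable fun p : (Fin m → ℝ) × ℝ => F (Fin.snoc p.1 (p.2 - ∑ i, p.1 i)) := by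
    fun_prop
  calc ∫⁻ y in U, F y
      = ∫⁻ u, ∫⁻ c, U.indicator F (Fin.snoc u c) := by
        rw [← lintegral_indicator hU, lintegral_eq_lintegral_lintegral_snoc _ (hF.indicator hU)]
    _ = ∫⁻ u, ∫⁻ t in Set.Ioi 0, F (Fin.snoc u (t - ∑ i, u i)) := by simp_rw [hshift]
    _ = ∫⁻ t in Set.Ioi 0, ∫⁻ u, F (Fin.snoc u (t - ∑ i, u i)) :=
        lintegral_lintegral_swap hmeas.aemeasurable
    _ = ∫⁻ t in Set.Ioi 0, ∫⁻ x, F (t • emb m x) * ENNReal.ofReal (t ^ m) :=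
        (setLIntegral_congr_fun measurableSet_Ioi hscale).symm
    _ = _ :=
        lintegral_lintegral_swap (f := fun t x => F (t • emb m x) * ENNReal.ofReal (t ^ m))
          (by fun_prop)

lemma measurableSet_simplex : MeasurableSet (Simplex m) := by
  unfold Simplex; measurability

lemma iSup_pos_of_mem_simplex {ℓ : Fin (m+1) → ℝ} (hℓ : ℓ ∈ Simplex m) : 0 < ⨆ i, ℓ i :=
  (hℓ.1 0).trans_le (le_ciSup (Finite.bddAbove_range ℓ) 0)

lemma smul_mem_normalize_preimage_inter_iff {s : Set (Fin (m+1) → ℝ)} {ℓ : Fin (m+1) → ℝ}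
    (hℓ : ∑ i, ℓ i = 1) {t : ℝ} (ht : 0 < t) :
    t • ℓ ∈ (fun y => (∑ i, y i)⁻¹ • y) ⁻¹' s ∩ Set.univ.pi (fun _ => Set.Ioo 0 1)
      ↔ ℓ ∈ Simplex m ∩ s ∧ t < (⨆ i, ℓ i)⁻¹ := by
  have hq : (∑ i, (t • ℓ) i)⁻¹ • (t • ℓ) = ℓ := by
    simp [← Finset.mul_sum, hℓ, smul_smul, ht.ne']
  rw [Set.mem_inter_iff, Set.mem_preimage, hq, smul_mem_pi_Ioo_iff ht]
  simp only [Simplex, Set.mem_inter_iff, Set.mem_ofPred_eq, hℓ, and_true]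
  tauto

lemma setLIntegral_Ioi_indicator_normalize_preimage {s : Set (Fin (m+1) → ℝ)}
    {ℓ : Fin (m+1) → ℝ} (hℓ : ∑ i, ℓ i = 1) :
    ∫⁻ t in Set.Ioi 0,
        ((fun y => (∑ i, y i)⁻¹ • y) ⁻¹' s ∩ Set.univ.pi (fun _ => Set.Ioo 0 1)).indicator 1
          (t • ℓ) * ENNReal.ofReal (t ^ m)
      = (Simplex m ∩ s).indicator
          (fun ℓ => ENNReal.ofReal ((⨆ i, ℓ i)⁻¹ ^ (m+1) / (m+1))) ℓ := by
  have hmem {t : ℝ} (ht : t ∈ Set.Ioi 0) := smul_mem_normalize_preimage_inter_iff (s := s) hℓ ht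
  by_cases hS : ℓ ∈ Simplex m ∩ s
  · rw [Set.indicator_of_mem hS,
      ← lintegral_Ioo_pow (inv_nonneg.2 (iSup_pos_of_mem_simplex hS.1).le),
      ← Measure.restrict_restrict_of_subset Set.Ioo_subset_Ioi_self,
      ← lintegral_indicator measurableSet_Ioo]
    refine setLIntegral_congr_fun measurableSet_Ioi fun t ht => ?_
    by_cases htS : t < (⨆ i, ℓ i)⁻¹
    · rw [Set.indicator_of_mem ((hmem ht).2 ⟨hS, htS⟩),
        Set.indicator_of_mem (show t ∈ Set.Ioo 0 _ from ⟨ht, htS⟩), Pi.one_apply, one_mul]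
    · rw [Set.indicator_of_notMem (fun h => htS ((hmem ht).1 h).2),
        Set.indicator_of_notMem (fun h => htS h.2), zero_mul]
  · rw [Set.indicator_of_notMem hS]
    refine (setLIntegral_congr_fun measurableSet_Ioi fun t ht => ?_).trans lintegral_zero
    rw [Set.indicator_of_notMem (fun h => hS ((hmem ht).1 h).1), zero_mul]

lemma ae_mem_simplex_simplexProb : ∀ᵐ ℓ ∂simplexProb m, ℓ ∈ Simplex m :=
  Measure.ae_smul_measure ((ae_map_iff measurable_emb.aemeasurable measurableSet_simplex).2
    (ae_restrict_mem (measurable_emb measurableSet_simplex))) _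

lemma natCast_factorial_mul_ofReal_div_factorial_succ (a : ℝ) :
    (m.factorial : ℝ≥0∞) * ENNReal.ofReal (a / (m+1).factorial)
      = ENNReal.ofReal (a / (m+1)) := by
  rw [← ENNReal.ofReal_natCast, ← ENNReal.ofReal_mul (by positivity), Nat.factorial_succ]
  congr 1
  push_cast
  field_simp

theorem map_normalize_cube_eq_withDensity :
    Measure.map (fun ℓ : Fin (m+1) → ℝ => (∑ i, ℓ i)⁻¹ • ℓ)
        (volume.restrict (Set.univ.pi fun _ : Fin (m+1) => Set.Icc (0:ℝ) 1))
      = (simplexProb m).withDensity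
          (fun ℓ => ENNReal.ofReal ((⨆ i, ℓ i)⁻¹ ^ (m+1) / (m+1).factorial)) := by
  set q := fun ℓ : Fin (m+1) → ℝ => (∑ i, ℓ i)⁻¹ • ℓ
  set g := fun ℓ : Fin (m+1) → ℝ => ENNReal.ofReal ((⨆ i, ℓ i)⁻¹ ^ (m+1) / (m+1))
  have hq : Measurable q := by fun_prop
  have hdens : Measurable fun ℓ : Fin (m+1) → ℝ =>
      ENNReal.ofReal ((⨆ i, ℓ i)⁻¹ ^ (m+1) / (m+1).factorial) := by fun_prop
  -- Passing to the open cube changes only a null set and puts all of it in `0 < ∑ i, y i`.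
  have hcube : (Set.univ.pi fun _ => Set.Ioo (0:ℝ) 1 : Set (Fin (m+1) → ℝ))
      =ᵐ[volume] Set.univ.pi fun _ => Set.Icc 0 1 := by
    rw [Set.pi_univ_Icc]; exact Measure.univ_pi_Ioo_ae_eq_Icc
  ext s hs
  set T := q ⁻¹' s ∩ Set.univ.pi fun _ => Set.Ioo (0:ℝ) 1
  have hT : MeasurableSet T := (hq hs).inter (MeasurableSet.univ_pi fun _ => measurableSet_Ioo)
  have hTpos : T ⊆ {y | 0 < ∑ i, y i} := fun y hy =>
    Finset.sum_pos (fun i _ => (hy.2 i (Set.mem_univ i)).1) Finset.univ_nonempty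
  calc Measure.map q (volume.restrict (Set.univ.pi fun _ => Set.Icc 0 1)) s
      = ∫⁻ y in {y | 0 < ∑ i, y i}, T.indicator 1 y := by
        rw [Measure.restrict_congr_set hcube.symm, Measure.map_apply hq hs,
          Measure.restrict_apply (hq hs), lintegral_indicator_one hT,
          Measure.restrict_apply hT, Set.inter_eq_left.2 hTpos]
    _ = ∫⁻ x, ∫⁻ t in Set.Ioi 0, T.indicator 1 (t • emb m x) * ENNReal.ofReal (t ^ m) :=
        setLIntegral_sum_pos_eq_lintegral_lintegral_smul_emb _ (measurable_one.indicator hT)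
    _ = ∫⁻ x, (emb m ⁻¹' (Simplex m ∩ s)).indicator (fun x => g (emb m x)) x := by
        congr with x
        exact setLIntegral_Ioi_indicator_normalize_preimage (sum_emb x)
    _ = _ := by
        rw [lintegral_indicator (measurable_emb (measurableSet_simplex.inter hs)),
          withDensity_apply _ hs, simplexProb, Measure.restrict_smul, lintegral_smul_measure,
          Measure.restrict_map measurable_emb hs,
          lintegral_map hdens measurable_emb,
          Measure.restrict_restrict (measurable_emb hs), Set.inter_comm, smul_eq_mul,
          ← lintegral_const_mul' _ _ (ENNReal.natCast_ne_top _)]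
        simp_rw [natCast_factorial_mul_ofReal_div_factorial_succ]
        rfl

theorem integral_inv_iSup_pow_simplexProb :
    ∫ ℓ, (⨆ i, ℓ i)⁻¹ ^ (m+1) ∂simplexProb m = (m+1).factorial := by
  have hmass := congrArg (· Set.univ) (map_normalize_cube_eq_withDensity (m := m))
  rw [Measure.map_apply (by fun_prop) .univ, Set.preimage_univ, Measure.restrict_apply_univ,
    Set.pi_univ_Icc, Real.volume_Icc_pi, withDensity_apply _ .univ, Measure.restrict_univ] at hmass
  have hnonneg : 0 ≤ᵐ[simplexProb m] fun ℓ => (⨆ i, ℓ i)⁻¹ ^ (m+1) / (m+1).factorial :=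
    ae_mem_simplex_simplexProb.mono fun ℓ hℓ => by
      have := iSup_pos_of_mem_simplex hℓ
      positivity
  have hmeas : Measurable fun ℓ : Fin (m+1) → ℝ => (⨆ i, ℓ i)⁻¹ ^ (m+1) / (m+1).factorial := by
    fun_prop
  have hint : ∫ ℓ, (⨆ i, ℓ i)⁻¹ ^ (m+1) / (m+1).factorial ∂simplexProb m = 1 := by
    rw [integral_eq_lintegral_of_nonneg_ae hnonneg hmeas.aestronglyMeasurable, ← hmass]
    simp
  rwa [integral_div, div_eq_one_iff_eq (by positivity)] at hint

end

/-- the pushforward under the normalization map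
q(ℓ) = ℓ/(ℓ_1+⋯+ℓ_n) of the uniform probability measure on the unit cube
has density ℓ ↦ k_n·|ℓ|^{-n} with respect to μ_n, where |ℓ| = max_i ℓ_i and
k_n⁻¹ = ∫ |ℓ|^{-n} dμ_n.  (Here n = m+1.) -/
theorem stmt13 (m : ℕ) :
    Measure.map (fun ℓ : Fin (m+1) → ℝ => (∑ i, ℓ i)⁻¹ • ℓ)
        (volume.restrict (Set.univ.pi fun _ : Fin (m+1) => Set.Icc (0:ℝ) 1))
      = (simplexProb m).withDensity (fun ℓ =>
          ENNReal.ofReal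
            ((∫ ℓ', (⨆ i, ℓ' i)⁻¹ ^ (m+1) ∂(simplexProb m))⁻¹
              * (⨆ i, ℓ i)⁻¹ ^ (m+1))) := by
  rw [integral_inv_iSup_pow_simplexProb, map_normalize_cube_eq_withDensity]
  simp_rw [inv_mul_eq_div]
end
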